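/- Let d : V_1 → V_0 and d' : V'_1 → V'_0 be linear maps between K-vector spaces with V_1 ≠ 0 and V'_1 ≠ 0, let L, L' be the associated linear categories, and let L ⊠ L' be the linear category with cells L_0 ⊗ L'_0 and L_1 ⊗ L'_1, source s ⊗ s', target t ⊗ t', identities 1 ⊗ 1', and composition X ∘ Y = X + Y − (1 ⊗ 1')(t ⊗ t')(X). Then the family of bilinear maps (v, v') ↦ v ⊗ v' does not respect compositions: there exist composable pairs (v,w) in L and (v',w') in L' such that (v ∘ w) ⊗ (v' ∘ w') ≠ (v ⊗ v') ∘ (w ⊗ w'). Hence ⊠ : L × L' → L ⊠ L' is not a bilinear functor. -/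

import Mathlib

/- The linear category L associated with a linear map d : V₁ → V₀ has
   L₀ = V₀, L₁ = V₀ × V₁, s(v₀,v₁) = v₀, t(v₀,v₁) = v₀ + d v₁, 1ₓ = (x,0),
   and composition (v₀,v₁) ∘ (v₀ + d v₁, w₁) = (v₀, v₁ + w₁).
   On L ⊠ L' (cells L₀ ⊗ L'₀ and L₁ ⊗ L'₁, source s ⊗ s', target t ⊗ t',
   identities 1 ⊗ 1') the composition is X ∘ Y = X + Y − (1 ⊗ 1')((t ⊗ t')(X)). -/

namespace TwoTerm

open scoped TensorProduct

variable {K : Type} [Field K] {V0 V1 : Type} [AddCommGroup V0] [AddCommGroup V1]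
  [Module K V0] [Module K V1]

/-- Source map `s : L₁ → L₀`. -/
def sMap (K : Type) [Field K] (V0 V1 : Type) [AddCommGroup V0] [AddCommGroup V1]
    [Module K V0] [Module K V1] : (V0 × V1) →ₗ[K] V0 :=
  LinearMap.fst K V0 V1

/-- Target map `t : L₁ → L₀`, `t(v₀,v₁) = v₀ + d v₁`. -/
def tMap (d : V1 →ₗ[K] V0) : (V0 × V1) →ₗ[K] V0 :=
  LinearMap.fst K V0 V1 + d.comp (LinearMap.snd K V0 V1)

/-- Identity map `1 : L₀ → L₁`, `1ₓ = (x,0)`. -/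
def oneMap (K : Type) [Field K] (V0 V1 : Type) [AddCommGroup V0] [AddCommGroup V1]
    [Module K V0] [Module K V1] : V0 →ₗ[K] (V0 × V1) :=
  LinearMap.prod LinearMap.id 0

/-- Composition of composable 1-cells of `L`: `(v₀,v₁) ∘ (v₀ + d v₁, w₁) = (v₀, v₁ + w₁)`. -/
def lcomp (v w : V0 × V1) : V0 × V1 := (v.1, v.2 + w.2)

variable {V'0 V'1 : Type} [AddCommGroup V'0] [AddCommGroup V'1]
  [Module K V'0] [Module K V'1]

/-- Composition on the 1-cells `L₁ ⊗ L'₁` of `L ⊠ L'`: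
`X ∘ Y = X + Y − (1 ⊗ 1')((t ⊗ t')(X))`. -/
noncomputable def bcomp (d : V1 →ₗ[K] V0) (d' : V'1 →ₗ[K] V'0)
    (X Y : (V0 × V1) ⊗[K] (V'0 × V'1)) : (V0 × V1) ⊗[K] (V'0 × V'1) :=
  X + Y -
    TensorProduct.map (oneMap K V0 V1) (oneMap K V'0 V'1)
      (TensorProduct.map (tMap d) (tMap d') X)

end TwoTerm

open TwoTerm
open scoped TensorProduct

/-! Since `v ⊗ v'` vanishes as soon as `v = 0`, the composite `(0 ⊗ v') ∘ (w ⊗ w')` in `L ⊠ L'`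
is just `w ⊗ w'`, whatever `v'` is. In `L`, `0 ∘ (0, y) = (0, y)`, and in `L'` composing
`v' = (0, x')` with its identity `w' = 1_{d' x'} = (d' x', 0)` gives back `v'`. So the two sides
are `(0, y) ⊗ (0, x')` and `(0, y) ⊗ (d' x', 0)`, which differ for `y, x' ≠ 0` because
`(0, x') ≠ (d' x', 0)` and a pure tensor of nonzero vectors over a field is nonzero. -/

theorem TensorProduct.tmul_ne_zero {R V W : Type*} [CommRing R] [NoZeroDivisors R]
    [AddCommGroup V] [AddCommGroup W] [Module R V] [Module R W] [Module.Projective R V]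
    [Module.Projective R W] {a : V} {b : W} (ha : a ≠ 0) (hb : b ≠ 0) : a ⊗ₜ[R] b ≠ 0 := by
  obtain ⟨f, hf⟩ := Module.Projective.exists_dual_ne_zero R ha
  obtain ⟨g, hg⟩ := Module.Projective.exists_dual_ne_zero R hb
  intro hab
  have : f a * g b = 0 := by
    simpa using congrArg (TensorProduct.lid R R ∘ TensorProduct.map f g) hab
  exact mul_ne_zero hf hg this

namespace TwoTerm

variable {K : Type} [Field K] {V0 V1 V'0 V'1 : Type} [AddCommGroup V0] [AddCommGroup V1]
  [AddCommGroup V'0] [AddCommGroup V'1] [Module K V0] [Module K V1] [Module K V'0] [Module K V'1]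

@[simp]
theorem sMap_apply (v : V0 × V1) : sMap K V0 V1 v = v.1 := rfl

@[simp]
theorem tMap_apply (d : V1 →ₗ[K] V0) (v : V0 × V1) : tMap d v = v.1 + d v.2 := rfl

@[simp]
theorem oneMap_apply (x : V0) : oneMap K V0 V1 x = (x, 0) := rfl

theorem lcomp_zero_left (w : V0 × V1) : lcomp 0 w = (0, w.2) := by
  simp [lcomp]

theorem lcomp_oneMap_right (v : V0 × V1) (x : V0) : lcomp v (oneMap K V0 V1 x) = v := by
  simp [lcomp]

theorem bcomp_zero_left (d : V1 →ₗ[K] V0) (d' : V'1 →ₗ[K] V'0)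
    (Y : (V0 × V1) ⊗[K] (V'0 × V'1)) : bcomp d d' 0 Y = Y := by
  simp [bcomp]

end TwoTerm

/-- If `V₁ ≠ 0` and `V'₁ ≠ 0`, the family of bilinear maps
`(v, v') ↦ v ⊗ v'` does not respect compositions: there exist composable pairs
`(v,w)` in `L` and `(v',w')` in `L'` with
`(v ∘ w) ⊗ (v' ∘ w') ≠ (v ⊗ v') ∘ (w ⊗ w')`.
Hence `⊠ : L × L' → L ⊠ L'` is not a bilinear functor. -/
theorem boxtimes_not_a_bilinear_functor (K : Type) [Field K]
    (V0 V1 V'0 V'1 : Type) [AddCommGroup V0] [AddCommGroup V1]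
    [AddCommGroup V'0] [AddCommGroup V'1]
    [Module K V0] [Module K V1] [Module K V'0] [Module K V'1]
    (d : V1 →ₗ[K] V0) (d' : V'1 →ₗ[K] V'0)
    (h1 : Nontrivial V1) (h1' : Nontrivial V'1) :
    ∃ (v w : V0 × V1) (v' w' : V'0 × V'1),
      tMap d v = sMap K V0 V1 w ∧ tMap d' v' = sMap K V'0 V'1 w' ∧
      lcomp v w ⊗ₜ[K] lcomp v' w' ≠ bcomp d d' (v ⊗ₜ[K] v') (w ⊗ₜ[K] w') := by
  obtain ⟨y, hy⟩ := exists_ne (0 : V1)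
  obtain ⟨x', hx'⟩ := exists_ne (0 : V'1)
  refine ⟨0, (0, y), (0, x'), oneMap K V'0 V'1 (d' x'), by simp, by simp, ?_⟩
  rw [TensorProduct.zero_tmul, bcomp_zero_left, lcomp_zero_left, lcomp_oneMap_right, ne_eq,
    ← sub_eq_zero, ← TensorProduct.tmul_sub]
  exact TensorProduct.tmul_ne_zero (by simp [hy]) (by simp [hx'])
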